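/- arXiv:1111.3282 — 4 statements merged into one kernel-verified Lean document; each statement's English description precedes it below -/
import Mathlib

section
/- Let n ≥ 3 and let b = (b_1, ..., b_n) be a nonincreasing sequence of nonnegative integers with b_1 ≤ n-1. Then b is the degree sequence of a simple graph on n vertices if and only if (1) the sum b_1 + ... + b_n is even, and (2) for every j with 1 ≤ j ≤ n-1, the sum of the first j elements is at most j(j-1) + Σ_{k=j+1}^{n} min(j, b_k). -/
/-- `b 1, …, b n` (1-indexed) is the degree sequence of a simple graph on `n` vertices. -/
def IsGraphical (n : ℕ) (b : ℕ → ℕ) : Prop :=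
  ∃ (G : SimpleGraph (Fin n)) (_ : DecidableRel G.Adj), ∀ i : Fin n, G.degree i = b (i.1 + 1)

/-!
Necessity: the degrees of a set `S` of `j` vertices add up to at most `j (j - 1)` plus the
number of edges leaving `S`, and a vertex outside `S` is the end of at most `min j (deg w)` of
those.

Sufficiency follows Choudum's induction on the degree sum. Let `s` be the last index with
`d s > 0` and `t < s` the end of the initial run of terms equal to `d 0`. Lowering `d t` and
`d s` by one keeps the sequence nonincreasing and preserves every Erdős–Gallai inequality, so
some graph realises the lowered sequence. Adding the edge `ts` realises `d`; if that edge is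
already there, some `i < s` is not adjacent to `t`, and since `deg i > deg s` the vertex `i` has
a neighbour `j` not adjacent to `s`: trading the edge `ij` for `ti` and `sj` does the job.
-/

open Finset

namespace SimpleGraph

variable {V : Type*} [Fintype V]

lemma degree_sup_of_disjoint {G H : SimpleGraph V} [DecidableRel G.Adj] [DecidableRel H.Adj]
    (h : Disjoint G H) (v : V) : (G ⊔ H).degree v = G.degree v + H.degree v := by
  rw [← card_neighborFinset_eq_degree, neighborFinset_sup_of_disjoint (h := h), card_disjUnion]
  rfl

lemma degree_eq_sum_ite (G : SimpleGraph V) [DecidableRel G.Adj] (v : V) :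
    G.degree v = ∑ w, if G.Adj v w then 1 else 0 := by
  rw [← card_neighborFinset_eq_degree, neighborFinset_eq_filter, card_filter]

lemma exists_not_adj_of_degree_lt_card (G : SimpleGraph V) [DecidableRel G.Adj] {x : V}
    {S : Finset V} (hS : G.degree x < #S) : ∃ i ∈ S, ¬G.Adj x i := by
  by_contra! h
  exact (card_le_card fun i hi => (G.mem_neighborFinset x i).2 (h i hi)).not_gt hS

variable [DecidableEq V]

lemma degree_sdiff_add_degree {G H : SimpleGraph V} [DecidableRel G.Adj] [DecidableRel H.Adj]
    (h : H ≤ G) (v : V) : (G \ H).degree v + H.degree v = G.degree v := by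
  simp only [← card_neighborFinset_eq_degree, neighborFinset_sdiff]
  exact card_sdiff_add_card_eq_card fun w hw => by simpa using h (by simpa using hw)

lemma degree_edge {x y : V} (hxy : x ≠ y) (v : V) :
    (edge x y).degree v = (if v = x then 1 else 0) + (if v = y then 1 else 0) := by
  rw [← card_neighborFinset_eq_degree]
  by_cases hvx : v = x
  · subst hvx
    rw [show (edge v y).neighborFinset v = {y} by
      ext; simp only [mem_neighborFinset, edge_adj, mem_singleton]; grind]
    simp [hxy]
  by_cases hvy : v = y
  · subst hvy
    rw [show (edge x v).neighborFinset v = {x} by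
      ext; simp only [mem_neighborFinset, edge_adj, mem_singleton]; grind]
    simp [hvx]
  · rw [show (edge x y).neighborFinset v = ∅ by
      ext; simp only [mem_neighborFinset, edge_adj, notMem_empty]; grind]
    simp [hvx, hvy]

lemma sum_degree_le (G : SimpleGraph V) [DecidableRel G.Adj] (S : Finset V) :
    ∑ v ∈ S, G.degree v ≤ #S * (#S - 1) + ∑ w ∈ Sᶜ, min #S (G.degree w) := by
  have hin : ∀ v ∈ S, ∑ w ∈ S, (if G.Adj v w then 1 else 0) ≤ #S - 1 := fun v hv => by
    rw [sum_boole, Nat.cast_id, ← card_erase_of_mem hv]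
    exact card_le_card fun w hw => by
      simp only [mem_filter] at hw; exact mem_erase.2 ⟨(G.ne_of_adj hw.2).symm, hw.1⟩
  have hout : ∀ w, ∑ v ∈ S, (if G.Adj v w then 1 else 0) ≤ min #S (G.degree w) := by
    intro w
    rw [sum_boole, Nat.cast_id, ← card_neighborFinset_eq_degree]
    exact le_min (card_filter_le _ _) (card_le_card fun v hv => by
      simp only [mem_filter] at hv; exact (G.mem_neighborFinset w v).2 hv.2.symm)
  calc ∑ v ∈ S, G.degree v
      = ∑ v ∈ S, ∑ w ∈ S, (if G.Adj v w then 1 else 0)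
        + ∑ v ∈ S, ∑ w ∈ Sᶜ, (if G.Adj v w then 1 else 0) := by
        simp_rw [← sum_add_distrib, sum_add_sum_compl, degree_eq_sum_ite]
    _ ≤ ∑ v ∈ S, (#S - 1) + ∑ w ∈ Sᶜ, ∑ v ∈ S, (if G.Adj v w then 1 else 0) :=
        add_le_add (sum_le_sum hin) sum_comm.le
    _ ≤ #S * (#S - 1) + ∑ w ∈ Sᶜ, min #S (G.degree w) := by
        rw [sum_const, smul_eq_mul]; gcongr with w; exact hout w

lemma exists_adj_not_adj_of_degree_lt (G : SimpleGraph V) [DecidableRel G.Adj] {x y i : V}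
    (hxy : G.Adj x y) (hxi : ¬G.Adj x i) (hyi : G.degree y < G.degree i) :
    ∃ j, G.Adj i j ∧ j ≠ y ∧ ¬G.Adj y j := by
  by_contra! h
  have hsub : (G.neighborFinset i).erase y ⊆ (G.neighborFinset y).erase x := by
    intro j hj
    obtain ⟨hjy, hij⟩ := mem_erase.1 hj
    rw [mem_neighborFinset] at hij
    exact mem_erase.2
      ⟨fun hjx => hxi (hjx ▸ hij.symm), (G.mem_neighborFinset _ _).2 (h j hij hjy)⟩
  have hle := (pred_card_le_card_erase (s := G.neighborFinset i) (a := y)).trans (card_le_card hsub)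
  rw [card_erase_of_mem ((G.mem_neighborFinset _ _).2 hxy.symm), card_neighborFinset_eq_degree,
    card_neighborFinset_eq_degree] at hle
  have hy : 0 < G.degree y := G.degree_pos_iff_exists_adj y |>.2 ⟨x, hxy.symm⟩
  omega

lemma exists_degree_eq_add_degree_edge (G : SimpleGraph V) [DecidableRel G.Adj] {x y : V}
    (hxy : x ≠ y) (h : G.Adj x y → ∃ i, i ≠ x ∧ ¬G.Adj x i ∧ G.degree y < G.degree i) :
    ∃ (H : SimpleGraph V) (_ : DecidableRel H.Adj),
      ∀ v, H.degree v = G.degree v + (edge x y).degree v := by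
  by_cases hadj : G.Adj x y
  · obtain ⟨i, hix, hxi, hyi⟩ := h hadj
    obtain ⟨j, hij, hjy, hyj⟩ := G.exists_adj_not_adj_of_degree_lt hadj hxi hyi
    have hiy : i ≠ y := by rintro rfl; exact hxi hadj
    have hji : j ≠ i := (G.ne_of_adj hij).symm
    have h₁ : Disjoint (G \ edge i j) (edge x i) :=
      (disjoint_edge _).2 fun h => hxi (sdiff_le (a := G) (b := edge i j) h)
    have h₂ : Disjoint ((G \ edge i j) ⊔ edge x i) (edge y j) := by
      rw [disjoint_edge]; simp [edge_adj, hyj, hxy.symm, hiy.symm]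
    refine ⟨(G \ edge i j) ⊔ edge x i ⊔ edge y j, inferInstance, fun v => ?_⟩
    rw [degree_sup_of_disjoint h₂, degree_sup_of_disjoint h₁,
      ← degree_sdiff_add_degree ((edge_le_iff G).2 (Or.inr hij)) v, degree_edge hxy,
      degree_edge hix.symm, degree_edge hjy.symm, degree_edge hji.symm]
    omega
  · exact ⟨G ⊔ edge x y, inferInstance, degree_sup_of_disjoint ((disjoint_edge G).2 hadj)⟩

end SimpleGraph

/-- Sequences are indexed from `0`: the `j`-th inequality bounds `d 0 + ⋯ + d (j - 1)`. -/
def erdosGallaiBound (n : ℕ) (d : ℕ → ℕ) (j : ℕ) : ℕ :=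
  j * (j - 1) + ∑ k ∈ Ico j n, min j (d k)

theorem even_sum_and_sum_le_erdosGallaiBound {n : ℕ} (G : SimpleGraph (Fin n))
    [DecidableRel G.Adj] {d : ℕ → ℕ} (hd : ∀ v, G.degree v = d v) :
    Even (∑ i ∈ range n, d i) ∧
      ∀ j < n, ∑ i ∈ range j, d i ≤ erdosGallaiBound n d j := by
  refine ⟨?_, fun j hj => ?_⟩
  · rw [← Fin.sum_univ_eq_sum_range]
    simp_rw [← hd, G.sum_degrees_eq_twice_card_edges]
    exact even_two_mul _
  · let S := Iio (⟨j, hj⟩ : Fin n)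
    have hL : ∑ i ∈ range j, d i = ∑ v ∈ S, d v := by
      simpa [S, Nat.Iio_eq_range] using sum_map S Fin.valEmbedding d
    have hR : ∑ k ∈ Ico j n, min j (d k) = ∑ v ∈ Sᶜ, min j (d v) := by
      rw [show Sᶜ = Ici ⟨j, hj⟩ by ext; simp [S]]
      simpa using sum_map (Ici ⟨j, hj⟩) Fin.valEmbedding (fun k => min j (d k))
    rw [hL, erdosGallaiBound, hR]
    simpa only [hd, S, Fin.card_Iio] using G.sum_degree_le S

lemma Nat.mul_sub_one_add_self (j : ℕ) : j * (j - 1) + j = j * j := by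
  rw [Nat.mul_sub_one]; have := Nat.le_mul_self j; omega

lemma Finset.sum_add_single_add_single {ι M : Type*} [DecidableEq ι] [AddCommMonoid M]
    (F : Finset ι) (g : ι → M) (t s : ι) (a b : M) :
    ∑ k ∈ F, (g + Pi.single t a + Pi.single s b : ι → M) k
      = ∑ k ∈ F, g k + (if t ∈ F then a else 0) + (if s ∈ F then b else 0) := by
  simp only [Pi.add_apply, sum_add_distrib, sum_pi_single']

lemma Finset.sum_min_eq_card_mul_add_sum {ι : Type*} {d : ι → ℕ} {j a : ℕ} (ha : j ≤ a)
    (ha' : a ≤ j + 1) (F : Finset ι) :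
    ∑ k ∈ F, min a (d k) = #{k ∈ F | j < d k} * a + ∑ k ∈ F with ¬j < d k, d k := by
  rw [← sum_filter_add_sum_filter_not F (fun k => j < d k), card_eq_sum_ones, sum_mul, one_mul]
  congr 1 <;> refine sum_congr rfl fun k hk => ?_ <;> simp only [mem_filter] at hk <;> omega

lemma sum_range_lt_erdosGallaiBound {n : ℕ} {d : ℕ → ℕ} {j c s : ℕ}
    (hc : ∀ i ≤ j, d i = c) (hjc : j < c) (hjs : j < s) (hs : s < n) (hds : 0 < d s)
    (hdsj : d s ≤ j) (h : ∑ i ∈ range (j + 1), d i ≤ erdosGallaiBound n d (j + 1)) :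
    ∑ i ∈ range j, d i < erdosGallaiBound n d j := by
  have hL : ∑ i ∈ range j, d i = j * c := by
    rw [sum_congr rfl fun i hi => hc i (mem_range.1 hi).le, sum_const, card_range, smul_eq_mul]
  have hRj : ∑ k ∈ Ico j n, min j (d k) = j + ∑ k ∈ Ico (j + 1) n, min j (d k) := by
    rw [sum_eq_sum_Ico_succ_bot (by omega), hc j le_rfl, min_eq_left hjc.le]
  have hB : d s ≤ ∑ k ∈ Ico (j + 1) n with ¬j < d k, d k :=
    single_le_sum (fun _ _ => Nat.zero_le _) (mem_filter.2 ⟨mem_Ico.2 ⟨hjs, hs⟩, by omega⟩)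
  rw [sum_range_succ, hL, hc j le_rfl, erdosGallaiBound, Nat.add_sub_cancel,
    sum_min_eq_card_mul_add_sum (by omega) le_rfl] at h
  rw [hL, erdosGallaiBound, hRj, sum_min_eq_card_mul_add_sum le_rfl (by omega)]
  set m := #{k ∈ Ico (j + 1) n | j < d k}
  set B := ∑ k ∈ Ico (j + 1) n with ¬j < d k, d k
  have hj := Nat.mul_sub_one_add_self j
  refine lt_of_not_ge fun hcon => ?_
  -- `h` and `hcon` give `c ≤ j + m`, hence `j * c ≤ j * (j + m) < j * (j + m) + B ≤ j * c`.
  have hcm : c ≤ j + m := by nlinarith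
  nlinarith

section Lowering

variable {n : ℕ} {d d' : ℕ → ℕ} {t s j : ℕ}

lemma erdosGallaiBound_le_of_lowering (hd : d = d' + Pi.single t 1 + Pi.single s 1)
    (hts : t ≠ s) :
    erdosGallaiBound n d j ≤ erdosGallaiBound n d' j
      + (if t ∈ Ico j n ∧ d t ≤ j then 1 else 0)
      + (if s ∈ Ico j n ∧ d s ≤ j then 1 else 0) := by
  have hmin : ∀ k ∈ Ico j n, min j (d k) ≤ min j (d' k)
      + (if k = t then if d t ≤ j then 1 else 0 else 0)
      + (if k = s then if d s ≤ j then 1 else 0 else 0) := by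
    intro k _
    have hdk := congrFun hd k
    simp only [Pi.add_apply, Pi.single_apply] at hdk
    split_ifs at hdk ⊢ <;> subst_vars <;> omega
  have := sum_le_sum hmin
  simp only [sum_add_distrib, sum_ite_eq'] at this
  simp only [erdosGallaiBound, ite_and]
  omega

lemma sum_le_erdosGallaiBound_of_lowering_of_lt (hd : d = d' + Pi.single t 1 + Pi.single s 1)
    (hts : t < s) (htj : t < j) (h : ∑ i ∈ range j, d i ≤ erdosGallaiBound n d j) :
    ∑ i ∈ range j, d' i ≤ erdosGallaiBound n d' j := by
  have hL := sum_add_single_add_single (range j) d' t s 1 1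
  have hR := erdosGallaiBound_le_of_lowering (n := n) (j := j) hd hts.ne
  rw [← hd] at hL
  simp only [mem_range, mem_Ico] at hL hR
  split_ifs at hL hR <;> omega

lemma sum_range_of_lowering_of_le (hd : d = d' + Pi.single t 1 + Pi.single s 1) (hts : t < s)
    (hjt : j ≤ t) : ∑ i ∈ range j, d' i = ∑ i ∈ range j, d i := by
  have := sum_add_single_add_single (range j) d' t s 1 1
  simp only [← hd, mem_range, show ¬t < j by omega, show ¬s < j by omega, if_false] at this
  omega

/-- The tail `∑ k ∈ Ico j n, d k` exceeds `j` and has the parity of `j`, so it is at least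
`j + 2`. -/
lemma sum_le_erdosGallaiBound_of_lowering_of_eq (hd : d = d' + Pi.single t 1 + Pi.single s 1)
    (hanti : AntitoneOn d (Set.Iio n)) (heven : Even (∑ i ∈ range n, d i))
    (hts : t < s) (hs : s < n) (hconst : ∀ i ≤ t, d i = j) (hjt : j ≤ t) (hds : 0 < d s) :
    ∑ i ∈ range j, d' i ≤ erdosGallaiBound n d' j := by
  have hL : ∑ i ∈ range j, d i = j * j := by
    rw [sum_congr rfl fun i hi => hconst i (by rw [mem_range] at hi; omega), sum_const, card_range,
      smul_eq_mul]
  have hmin : ∑ k ∈ Ico j n, min j (d' k) = ∑ k ∈ Ico j n, d' k :=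
    sum_congr rfl fun k hk => by
      have hdk := congrFun hd k
      have := hconst 0 (Nat.zero_le t)
      have := hanti (a := 0) (Set.mem_Iio.2 (by omega)) (mem_Ico.1 hk).2 (Nat.zero_le k)
      simp only [Pi.add_apply] at hdk
      omega
  have htail := sum_add_single_add_single (Ico j n) d' t s 1 1
  simp only [← hd, mem_Ico, show j ≤ t by omega, show t < n by omega, show j ≤ s by omega, hs,
    and_self, if_true] at htail
  have hts_le : d t + d s ≤ ∑ k ∈ Ico j n, d k := by
    rw [← sum_pair hts.ne]
    exact sum_le_sum_of_subset fun k hk => by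
      simp only [mem_insert, mem_singleton] at hk; simp only [mem_Ico]; omega
  have hodd : ∑ k ∈ Ico j n, d k ≠ j + 1 := fun h => by
    rw [range_eq_Ico, ← sum_Ico_consecutive _ (Nat.zero_le j) (by omega), ← range_eq_Ico,
      hL, h, show j * j + (j + 1) = j * (j + 1) + 1 by ring] at heven
    exact Nat.not_even_iff_odd.2 (Nat.even_mul_succ_self _).add_one heven
  rw [sum_range_of_lowering_of_le hd hts hjt, hL, erdosGallaiBound, hmin]
  have := hconst t le_rfl
  have := Nat.mul_sub_one_add_self j
  omega

lemma sum_le_erdosGallaiBound_of_lowering_of_le (hd : d = d' + Pi.single t 1 + Pi.single s 1)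
    (hanti : AntitoneOn d (Set.Iio n)) (heven : Even (∑ i ∈ range n, d i))
    (hEG : ∀ j < n, ∑ i ∈ range j, d i ≤ erdosGallaiBound n d j)
    (hts : t < s) (hs : s < n) (hds : 0 < d s) (hconst : ∀ i ≤ t, d i = d 0) (hjt : j ≤ t) :
    ∑ i ∈ range j, d' i ≤ erdosGallaiBound n d' j := by
  have hL := sum_range_of_lowering_of_le hd hts hjt
  have hdt := hconst t le_rfl
  rcases lt_trichotomy (d 0) j with hlt | heq | hgt
  · calc ∑ i ∈ range j, d' i ≤ ∑ _i ∈ range j, (j - 1) :=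
          hL ▸ sum_le_sum fun i hi => by rw [hconst i (by rw [mem_range] at hi; omega)]; omega
      _ ≤ erdosGallaiBound n d' j := by simp [erdosGallaiBound]
  · exact sum_le_erdosGallaiBound_of_lowering_of_eq hd hanti heven hts hs
      (fun i hi => (hconst i hi).trans heq) hjt hds
  · -- As `d t > j`, only the term `min j (d s)` of the bound can drop; when it does, the
    -- `j`-th inequality for `d` was strict.
    have hR := erdosGallaiBound_le_of_lowering (n := n) (j := j) hd hts.ne
    simp only [show ¬d t ≤ j by omega, and_false, if_false] at hR
    by_cases hdsj : d s ≤ j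
    · have := sum_range_lt_erdosGallaiBound (fun i hi => hconst i (by omega)) hgt (by omega) hs
        hds hdsj (hEG (j + 1) (by omega))
      split_ifs at hR <;> omega
    · simp only [hdsj, and_false, if_false] at hR
      have := hEG j (by omega)
      omega

lemma antitoneOn_of_lowering (hd : d = d' + Pi.single t 1 + Pi.single s 1)
    (hanti : AntitoneOn d (Set.Iio n)) (hts : t < s) (hs : s < n)
    (hzero : ∀ k, s < k → k < n → d k = 0) (hstep : t + 1 < s → d (t + 1) < d t) :
    AntitoneOn d' (Set.Iio n) := by
  intro i hi k hk hik
  have hdi := congrFun hd i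
  have hdk := congrFun hd k
  simp only [Pi.add_apply, Pi.single_apply] at hdi hdk
  have := hanti hi hk hik
  have := hanti (a := t) (Set.mem_Iio.2 (by omega)) hs hts.le
  have htk : t < k → k < s → d k < d t := fun h₁ h₂ =>
    (hanti (a := t + 1) (Set.mem_Iio.2 (by omega)) hk h₁).trans_lt (hstep (by omega))
  have hsk : s < k → d k = 0 := fun h => hzero k h hk
  split_ifs at hdi hdk <;> subst_vars <;> omega

lemma exists_graph_of_lowering (hd : d = d' + Pi.single t 1 + Pi.single s 1)
    (hanti : AntitoneOn d (Set.Iio n)) (hts : t < s) (hs : s < n) (hd0 : d 0 ≤ s)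
    (G' : SimpleGraph (Fin n)) [DecidableRel G'.Adj] (hG' : ∀ v, G'.degree v = d' v) :
    ∃ (G : SimpleGraph (Fin n)) (_ : DecidableRel G.Adj), ∀ v, G.degree v = d v := by
  have hdv : ∀ v, d v = d' v + (if v = t then 1 else 0) + (if v = s then 1 else 0) := fun v => by
    simp [hd, Pi.single_apply]
  have hd't : d' t < s := by
    have hdt := hdv t
    have := hanti (a := 0) (Set.mem_Iio.2 (by omega)) (Set.mem_Iio.2 (by omega)) (Nat.zero_le t)
    simp only [hts.ne, if_true, if_false] at hdt
    omega
  let x : Fin n := ⟨t, by omega⟩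
  let y : Fin n := ⟨s, hs⟩
  have hxy : x ≠ y := Fin.ne_of_val_ne hts.ne
  have hrewire : G'.Adj x y → ∃ i, i ≠ x ∧ ¬G'.Adj x i ∧ G'.degree y < G'.degree i := by
    intro hadj
    obtain ⟨i, hi, hxi⟩ := G'.exists_not_adj_of_degree_lt_card (x := x) (S := (Iic y).erase x)
      (by rwa [card_erase_of_mem (mem_Iic.2 (Fin.le_def.2 hts.le)), Fin.card_Iic, hG',
        Nat.add_sub_cancel])
    obtain ⟨hix, hiy⟩ := mem_erase.1 hi
    have his : i.1 < s := lt_of_le_of_ne (Fin.le_def.1 (mem_Iic.1 hiy)) fun h => by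
      rw [show i = y from Fin.ext h] at hxi; exact hxi hadj
    have hit : i.1 ≠ t := fun h => hix (Fin.ext h)
    refine ⟨i, hix, hxi, ?_⟩
    have := hanti i.2 hs his.le
    have hdi := hdv i
    have hds := hdv s
    simp only [hit, his.ne, if_true, if_false] at hdi hds
    rw [hG', hG']
    change d' s < d' i
    omega
  obtain ⟨G, _, hG⟩ := G'.exists_degree_eq_add_degree_edge hxy hrewire
  refine ⟨G, inferInstance, fun v => ?_⟩
  rw [hG, hG', SimpleGraph.degree_edge hxy, hdv]
  simp [x, y, Fin.ext_iff, add_assoc]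

end Lowering

lemma exists_last_pos {n : ℕ} {d : ℕ → ℕ} (h : ∑ i ∈ range n, d i ≠ 0) :
    ∃ s < n, 0 < d s ∧ ∀ k, s < k → k < n → d k = 0 := by
  obtain ⟨i, hi, hdi⟩ := exists_ne_zero_of_sum_ne_zero h
  rw [mem_range] at hi
  set P := fun k => 0 < d k
  refine ⟨Nat.findGreatest P (n - 1), ?_, ?_, fun k hk hkn => ?_⟩
  · have := Nat.findGreatest_le (P := P) (n - 1); omega
  · exact Nat.findGreatest_spec (P := P) (m := i) (by omega) (Nat.pos_of_ne_zero hdi)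
  · by_contra h
    exact Nat.findGreatest_is_greatest (P := P) hk (by omega) (Nat.pos_of_ne_zero h)

lemma exists_end_of_first_run {n s : ℕ} {d : ℕ → ℕ} (hanti : AntitoneOn d (Set.Iio n))
    (hs : s < n) (hs0 : 0 < s) :
    ∃ t < s, (∀ i ≤ t, d i = d 0) ∧ (t + 1 < s → d (t + 1) < d t) := by
  set P := fun i => d i = d 0
  set t := Nat.findGreatest P (s - 1)
  have ht : d t = d 0 := Nat.findGreatest_spec (P := P) (m := 0) (Nat.zero_le _) rfl
  have hts : t ≤ s - 1 := Nat.findGreatest_le _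
  refine ⟨t, by omega, fun i hi => le_antisymm ?_ ?_, fun h => ?_⟩
  · exact hanti (Set.mem_Iio.2 (by omega)) (Set.mem_Iio.2 (by omega)) (Nat.zero_le i)
  · exact ht ▸ hanti (Set.mem_Iio.2 (by omega)) (Set.mem_Iio.2 (by omega)) hi
  · have hne := Nat.findGreatest_is_greatest (P := P) (lt_add_one t) (by omega)
    have := hanti (Set.mem_Iio.2 (by omega)) (Set.mem_Iio.2 (by omega)) (Nat.le_add_right t 1)
    simp only [P] at hne
    omega

lemma head_le_of_sum_le_erdosGallaiBound_one {n s : ℕ} {d : ℕ → ℕ}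
    (h : ∑ i ∈ range 1, d i ≤ erdosGallaiBound n d 1) (hs : s < n)
    (hzero : ∀ k, s < k → k < n → d k = 0) : d 0 ≤ s := by
  have hhead : ∑ k ∈ Ico 1 (s + 1), min 1 (d k) ≤ s := by
    simpa using
      sum_le_card_nsmul (Ico 1 (s + 1)) (fun k => min 1 (d k)) 1 fun k _ => min_le_left _ _
  have htail : ∑ k ∈ Ico (s + 1) n, min 1 (d k) = 0 :=
    sum_eq_zero fun k hk => by rw [hzero k (mem_Ico.1 hk).1 (mem_Ico.1 hk).2]; rfl
  rw [sum_range_one, erdosGallaiBound, ← sum_Ico_consecutive _ (by omega : 1 ≤ s + 1) hs,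
    htail] at h
  omega

theorem exists_graph_of_erdosGallai {n : ℕ} (hn : 1 < n) {d : ℕ → ℕ}
    (hanti : AntitoneOn d (Set.Iio n)) (heven : Even (∑ i ∈ range n, d i))
    (hEG : ∀ j < n, ∑ i ∈ range j, d i ≤ erdosGallaiBound n d j) :
    ∃ (G : SimpleGraph (Fin n)) (_ : DecidableRel G.Adj), ∀ v, G.degree v = d v := by
  induction hN : ∑ i ∈ range n, d i using Nat.strong_induction_on generalizing d with
  | _ N ih =>
  rcases eq_or_ne N 0 with rfl | hN0
  · refine ⟨⊥, inferInstance, fun v => ?_⟩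
    rw [SimpleGraph.bot_degree, sum_eq_zero_iff.1 hN v.1 (by simp)]
  obtain ⟨s, hs, hds, hzero⟩ := exists_last_pos (hN ▸ hN0)
  have hd0 := head_le_of_sum_le_erdosGallaiBound_one (hEG 1 hn) hs hzero
  have hsd0 : d s ≤ d 0 := hanti (Set.mem_Iio.2 (by omega)) hs (Nat.zero_le s)
  obtain ⟨t, hts, hconst, hstep⟩ := exists_end_of_first_run hanti hs (by omega)
  set d' := d - Pi.single t 1 - Pi.single s 1
  have hd : d = d' + Pi.single t 1 + Pi.single s 1 := by
    ext i
    have := hconst t le_rfl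
    simp only [d', Pi.add_apply, Pi.sub_apply, Pi.single_apply]
    split_ifs <;> subst_vars <;> omega
  have hsum := sum_add_single_add_single (range n) d' t s 1 1
  simp only [← hd, mem_range, hs, show t < n by omega, if_true] at hsum
  obtain ⟨G', _, hG'⟩ := ih _ (by omega) (antitoneOn_of_lowering hd hanti hts hs hzero hstep)
    (by obtain ⟨r, hr⟩ := heven; exact ⟨r - 1, by omega⟩)
    (fun j hj => if htj : t < j then
        sum_le_erdosGallaiBound_of_lowering_of_lt hd hts htj (hEG j hj)
      else sum_le_erdosGallaiBound_of_lowering_of_le hd hanti heven hEG hts hs hds hconst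
        (by omega)) rfl
  exact exists_graph_of_lowering hd hanti hts hs hd0 G' hG'

theorem erdos_gallai_general (n : ℕ) (hn : 3 ≤ n) (b : ℕ → ℕ)
    (hmono : ∀ i j, 1 ≤ i → i ≤ j → j ≤ n → b j ≤ b i) :
    IsGraphical n b ↔
      (Even (∑ i ∈ Finset.Icc 1 n, b i) ∧
        ∀ j, 1 ≤ j → j ≤ n - 1 →
          (∑ i ∈ Finset.Icc 1 j, b i) ≤ j * (j - 1) + ∑ k ∈ Finset.Icc (j + 1) n, min j (b k)) := by
  have hL : ∀ j, ∑ i ∈ Icc 1 j, b i = ∑ i ∈ range j, b (i + 1) := fun j => by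
    rw [range_eq_Ico, sum_Ico_add' b 0 j 1, zero_add, Ico_add_one_right_eq_Icc]
  have hR : ∀ j, ∑ k ∈ Icc (j + 1) n, min j (b k) = ∑ k ∈ Ico j n, min j (b (k + 1)) := by
    intro j
    rw [sum_Ico_add' (fun k => min j (b k)) j n 1, Ico_add_one_right_eq_Icc]
  simp only [hL, hR]
  constructor
  · rintro ⟨G, _, hG⟩
    obtain ⟨heven, hEG⟩ := even_sum_and_sum_le_erdosGallaiBound G (d := fun i => b (i + 1)) hG
    exact ⟨heven, fun j _ hj => hEG j (by omega)⟩
  · rintro ⟨heven, hEG⟩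
    refine exists_graph_of_erdosGallai (by omega)
      (fun i _ k hk hik => hmono _ _ (by omega) (by omega) (by rw [Set.mem_Iio] at hk; omega)) heven
      fun j hj => ?_
    rcases Nat.eq_zero_or_pos j with rfl | hj0
    · simp
    · exact hEG j hj0 (by omega)

/-- Erdős–Gallai theorem. -/
theorem erdos_gallai (n : ℕ) (hn : 3 ≤ n) (b : ℕ → ℕ)
    (hmono : ∀ i j, 1 ≤ i → i ≤ j → j ≤ n → b j ≤ b i)
    (hbound : b 1 ≤ n - 1) :
    IsGraphical n b ↔
      (Even (∑ i ∈ Finset.Icc 1 n, b i) ∧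
        ∀ j, 1 ≤ j → j ≤ n - 1 →
          (∑ i ∈ Finset.Icc 1 j, b i) ≤ j * (j - 1) + ∑ k ∈ Finset.Icc (j + 1) n, min j (b k)) :=
  erdos_gallai_general n hn b hmono
end

section
/- For a nonincreasing sequence b = (b_1, ..., b_n) of nonnegative integers, if i > w_i then Σ_{k=i+1}^{n} min(i, b_k) = H_n - H_i, and if i ≤ w_i then Σ_{k=i+1}^{n} min(i, b_k) = i(w_i - i) + H_n - H_{w_i}, where w_i is the largest index k with b_k ≥ i (w_i = 0 if none), and H_j = b_1 + ... + b_j with H_0 = 0. -/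
/-!
Write `w = w_i`. For `1 ≤ k ≤ n` we have `i ≤ b k ↔ k ≤ w`: one direction is the maximality of `w`,
the other holds because `b` is nonincreasing and `i ≤ b w`. So on `(i, max i w]` every summand
`min i (b k)` equals `i`, and on `(max i w, n]` it equals `b k`, whose sum is a difference of
prefix sums.
-/

open Finset

lemma Finset.sup_id_mem_of_pos {s : Finset ℕ} (h : 0 < s.sup id) : s.sup id ∈ s := by
  have hs : s.Nonempty := by
    by_contra hempty
    simp [not_nonempty_iff_eq_empty.mp hempty] at h
  simpa using sup_mem_of_nonempty (f := id) hs

lemma Finset.not_of_sup_id_filter_lt {s : Finset ℕ} {p : ℕ → Prop} [DecidablePred p] {k : ℕ}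
    (hk : k ∈ s) (h : (s.filter p).sup id < k) : ¬ p k := fun hp =>
  (le_sup (f := id) (mem_filter.mpr ⟨hk, hp⟩)).not_gt h

lemma Finset.sum_Ioc_eq_sum_Icc_one_sub {M : Type*} [AddCommMonoid M] [PartialOrder M] [Sub M]
    [OrderedSub M] [AddLeftReflectLE M] (f : ℕ → M) {a c : ℕ} (h : a ≤ c) :
    ∑ k ∈ Ioc a c, f k = ∑ k ∈ Icc 1 c, f k - ∑ k ∈ Icc 1 a, f k := by
  have hIcc_one : ∀ x, Icc 1 x = Ioc 0 x := Icc_add_one_left_eq_Ioc 0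
  rw [hIcc_one, hIcc_one, ← sum_Ioc_consecutive f (Nat.zero_le a) h, add_tsub_cancel_left]

lemma Finset.sum_Ioc_min_eq {b : ℕ → ℕ} {i a m c : ℕ} (ham : a ≤ m) (hmc : m ≤ c)
    (hlo : ∀ k ∈ Ioc a m, i ≤ b k) (hhi : ∀ k ∈ Ioc m c, b k < i) :
    ∑ k ∈ Ioc a c, min i (b k) = i * (m - a) + ∑ k ∈ Ioc m c, b k := by
  rw [← sum_Ioc_consecutive _ ham hmc,
    sum_congr rfl fun k hk => min_eq_left (hlo k hk),
    sum_congr rfl fun k hk => min_eq_right (hhi k hk).le,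
    sum_const, Nat.card_Ioc, smul_eq_mul, mul_comm]

/-- Closed-form evaluation of the Erdős–Gallai tail sum via weight points. -/
theorem tail_sum_closed_form (n : ℕ) (b : ℕ → ℕ)
    (hmono : ∀ i j, 1 ≤ i → i ≤ j → j ≤ n → b j ≤ b i)
    (w : ℕ → ℕ) (hw : ∀ i, w i = ((Finset.Icc 1 n).filter fun k => i ≤ b k).sup id)
    (H : ℕ → ℕ) (hH : ∀ i, H i = ∑ k ∈ Finset.Icc 1 i, b k) :
    ∀ i, 1 ≤ i → i ≤ n →
      (w i < i → (∑ k ∈ Finset.Icc (i + 1) n, min i (b k)) = H n - H i) ∧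
      (i ≤ w i → (∑ k ∈ Finset.Icc (i + 1) n, min i (b k)) = i * (w i - i) + (H n - H (w i))) := by
  intro i hi hin
  have hlt : ∀ k ∈ Ioc (w i) n, b k < i := by
    intro k hk
    obtain ⟨hwk, hkn⟩ := mem_Ioc.mp hk
    exact not_le.mp <| not_of_sup_id_filter_lt (p := fun k => i ≤ b k)
      (mem_Icc.mpr ⟨by omega, hkn⟩) (hw i ▸ hwk)
  simp only [Icc_add_one_left_eq_Ioc, hH]
  constructor
  · intro hwi
    rw [sum_Ioc_min_eq le_rfl hin (by simp) fun _ hk => hlt _ (Ioc_subset_Ioc_left hwi.le hk),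
      sum_Ioc_eq_sum_Icc_one_sub _ hin, Nat.sub_self, mul_zero, zero_add]
  · intro hiw
    have hwS : w i ∈ (Icc 1 n).filter fun k => i ≤ b k := by
      rw [hw]
      exact sup_id_mem_of_pos (hw i ▸ hi.trans hiw)
    obtain ⟨hwIcc, hbw⟩ := mem_filter.mp hwS
    have hwn : w i ≤ n := (mem_Icc.mp hwIcc).2
    have hge : ∀ k ∈ Ioc i (w i), i ≤ b k := fun k hk =>
      hbw.trans (hmono k (w i) (hi.trans (mem_Ioc.mp hk).1.le) (mem_Ioc.mp hk).2 hwn)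
    rw [sum_Ioc_min_eq hiw hwn hge hlt, sum_Ioc_eq_sum_Icc_one_sub _ hwn]
end

section
/- For n ≥ 1, the number of nonincreasing sequences (b_1, ..., b_n) of integers with n-1 ≥ b_1 ≥ ... ≥ b_n ≥ 0 whose sum is even equals (1/2)(C(2n-1, n) + C(n-1, ⌊n/2⌋)). -/
/-!
Shifting the `i`-th smallest entry of a bounded monotone sequence up by `i` identifies
`n`-term sequences with values in `[0, m]` with `n`-subsets of `{0, …, m + n - 1}`, and adds the
constant `0 + 1 + ⋯ + (n - 1)` to the sum. Counting subsets of even sum is thus a matter of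
evaluating `∑_T (-1)^(∑ T)`, the Gaussian binomial coefficient at `q = -1`; it satisfies the
`q`-Pascal recurrence, and two steps of it give the ordinary Pascal rule up to sign, whence
`∑_T (-1)^(∑ T) = (-1)^⌊k/2⌋ C(a, ⌊k/2⌋)` for `k`-subsets of `{0, …, 2a}`. For `m = n - 1` and
`k = n` the sign `(-1)^⌊n/2⌋` cancels against `(-1)^(0 + 1 + ⋯ + (n - 1))`.
-/

open Finset

lemma StrictMono.apply_add_sub_le {n : ℕ} {u : Fin n → ℕ} (hu : StrictMono u) {i j : Fin n}
    (hij : i ≤ j) : u i + (j - i : ℕ) ≤ u j := by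
  have hcard := card_le_card_of_injOn u (s := Icc i j) (t := Icc (u i) (u j))
    (fun x hx => by
      rw [coe_Icc, Set.mem_Icc] at hx ⊢
      exact ⟨hu.monotone hx.1, hu.monotone hx.2⟩) hu.injective.injOn
  rw [Fin.card_Icc, Nat.card_Icc] at hcard
  have : u i ≤ u j := hu.monotone hij
  omega

lemma Fin.monotone_comp_rev_iff {n : ℕ} {α : Type*} [Preorder α] {f : Fin n → α} :
    Monotone (f ∘ Fin.rev) ↔ Antitone f :=
  ⟨fun h => by simpa [Function.comp_def] using h.comp_antitone Fin.rev_anti,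
    fun h => h.comp Fin.rev_anti⟩

lemma two_mul_card_filter_even {ι : Type*} (s : Finset ι) (w : ι → ℕ) :
    (2 * #{x ∈ s | Even (w x)} : ℤ) = #s + ∑ x ∈ s, (-1) ^ w x := by
  rw [← sum_filter_add_sum_filter_not s (fun x => Even (w x)),
    ← card_filter_add_card_filter_not (s := s) (fun x => Even (w x)),
    sum_congr rfl fun x hx => (mem_filter.1 hx).2.neg_one_pow,
    sum_congr rfl fun x hx => (Nat.not_even_iff_odd.1 (mem_filter.1 hx).2).neg_one_pow]
  simp only [sum_const, nsmul_eq_mul, mul_one, mul_neg, Nat.cast_add]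
  ring

lemma even_sum_range_add_div_two (n : ℕ) : Even (∑ i ∈ range n, i + n / 2) := by
  induction n using Nat.twoStepInduction with
  | zero => simp
  | one => simp
  | more n ih _ =>
    obtain ⟨r, hr⟩ := ih
    refine ⟨r + n + 1, ?_⟩
    rw [sum_range_succ, sum_range_succ, show (n + 2) / 2 = n / 2 + 1 by omega]
    omega

section Staircase

variable {n : ℕ} {c : Fin n → ℕ}

def staircase (c : Fin n → ℕ) : Finset ℕ :=
  univ.image fun i => c i + i

lemma Monotone.strictMono_add_val (hc : Monotone c) : StrictMono fun i : Fin n => c i + i :=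
  fun _ _ h => add_lt_add_of_le_of_lt (hc h.le) h

lemma sum_staircase (hc : Monotone c) :
    ∑ x ∈ staircase c, x = ∑ i, c i + ∑ i ∈ range n, i := by
  rw [staircase, sum_image fun _ _ _ _ h => hc.strictMono_add_val.injective h, sum_add_distrib,
    Fin.sum_univ_eq_sum_range (fun i => i) n]

lemma staircase_mem_powersetCard (hc : Monotone c) {m : ℕ} (hm : ∀ i, c i ≤ m) :
    staircase c ∈ (range (m + n)).powersetCard n := by
  rw [mem_powersetCard, staircase, card_image_of_injective _ hc.strictMono_add_val.injective,
    card_univ, Fintype.card_fin]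
  refine ⟨fun x hx => ?_, rfl⟩
  obtain ⟨i, -, rfl⟩ := mem_image.1 hx
  have := hm i
  rw [mem_range]
  omega

lemma staircase_injOn : Set.InjOn staircase {c : Fin n → ℕ | Monotone c} := by
  intro c hc c' hc' h
  have hrange : Set.range (fun i : Fin n => c i + i) = Set.range fun i : Fin n => c' i + i := by
    simpa [staircase, Set.image_univ] using congrArg (fun T : Finset ℕ => (T : Set ℕ)) h
  funext i
  have hrange_inj := hc.strictMono_add_val.range_inj (Monotone.strictMono_add_val hc')
  simpa using congrFun (hrange_inj.1 hrange) i

lemma exists_staircase_eq {m : ℕ} {T : Finset ℕ} (hT : T ∈ (range (m + n)).powersetCard n) :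
    ∃ c : Fin n → ℕ, Monotone c ∧ (∀ i, c i ≤ m) ∧ staircase c = T := by
  obtain ⟨hsub, hcard⟩ := mem_powersetCard.1 hT
  set u := T.orderEmbOfFin hcard
  have hgap {i j : Fin n} (h : i ≤ j) := u.strictMono.apply_add_sub_le h
  have hval (i : Fin n) : (i : ℕ) ≤ u i := by
    have := hgap (show ⟨0, i.pos⟩ ≤ i from Nat.zero_le _)
    simp only at this
    omega
  refine ⟨fun i => u i - i, fun i j hij => ?_, fun i => ?_, ?_⟩
  · have := hgap hij
    have : (i : ℕ) ≤ j := hij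
    show u i - i ≤ u j - j
    omega
  · have hn : n - 1 < n := by have := i.isLt; omega
    have hlast := hgap (show i ≤ ⟨n - 1, hn⟩ from Nat.le_sub_one_of_lt i.isLt)
    have : u ⟨n - 1, hn⟩ < m + n := mem_range.1 (hsub (T.orderEmbOfFin_mem hcard _))
    simp only at hlast
    show u i - i ≤ m
    omega
  · rw [staircase, ← T.image_orderEmbOfFin_univ hcard]
    exact image_congr fun i _ => Nat.sub_add_cancel (hval i)

theorem card_monotone_bounded_eq_card_filter (m : ℕ) (p : ℕ → Prop) [DecidablePred p] :
    Nat.card {c : Fin n → ℕ //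
        Monotone c ∧ (∀ i, c i ≤ m) ∧ p (∑ i, c i + ∑ i ∈ range n, i)} =
      #{T ∈ (range (m + n)).powersetCard n | p (∑ x ∈ T, x)} := by
  rw [← Nat.card_eq_finsetCard]
  refine Nat.card_eq_of_bijective (fun c => ⟨staircase c.1, mem_filter.2
    ⟨staircase_mem_powersetCard c.2.1 c.2.2.1, by rw [sum_staircase c.2.1]; exact c.2.2.2⟩⟩)
    ⟨fun c c' h => Subtype.ext (staircase_injOn c.2.1 c'.2.1 (congrArg Subtype.val h)), ?_⟩
  rintro ⟨T, hT⟩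
  obtain ⟨hT, hp⟩ := mem_filter.1 hT
  obtain ⟨c, hc, hm, rfl⟩ := exists_staircase_eq hT
  exact ⟨⟨c, hc, hm, by rwa [sum_staircase hc] at hp⟩, rfl⟩

end Staircase

theorem card_antitone_bounded_eq_card_monotone_bounded (n m : ℕ) (p : ℕ → Prop) :
    Nat.card {b : Fin n → ℕ // Antitone b ∧ (∀ i, b i ≤ m) ∧ p (∑ i, b i)} =
      Nat.card {c : Fin n → ℕ // Monotone c ∧ (∀ i, c i ≤ m) ∧ p (∑ i, c i)} := by
  refine Nat.card_congr (Equiv.subtypeEquiv ⟨(· ∘ Fin.rev), (· ∘ Fin.rev),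
    fun b => by simp [Function.comp_def], fun b => by simp [Function.comp_def]⟩ fun b => ?_)
  exact and_congr Fin.monotone_comp_rev_iff.symm
    (and_congr Fin.rev_surjective.forall (by rw [← Equiv.sum_comp Fin.revPerm b]; rfl))

def altSubsetSum (m k : ℕ) : ℤ :=
  ∑ T ∈ (range m).powersetCard k, (-1) ^ ∑ x ∈ T, x

namespace altSubsetSum

@[simp] lemma zero_right (m : ℕ) : altSubsetSum m 0 = 1 := by
  simp [altSubsetSum]

@[simp] lemma zero_succ (k : ℕ) : altSubsetSum 0 (k + 1) = 0 := by
  rw [altSubsetSum, range_zero, powersetCard_eq_empty.2 (Nat.succ_pos k), sum_empty]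

lemma succ_succ (m k : ℕ) :
    altSubsetSum (m + 1) (k + 1) = altSubsetSum m (k + 1) + (-1) ^ m * altSubsetSum m k := by
  have hm : m ∉ range m := notMem_range_self
  have hdisj : Disjoint ((range m).powersetCard (k + 1))
      (((range m).powersetCard k).image (insert m)) := by
    simp only [disjoint_left, mem_image, mem_powersetCard, not_exists, not_and]
    rintro _ ⟨hT, -⟩ U - rfl
    exact hm (hT (mem_insert_self m U))
  have hinj : Set.InjOn (insert m) ((range m).powersetCard k : Set (Finset ℕ)) := by
    intro T hT U hU h
    have hmT : m ∉ T := fun h' => hm ((mem_powersetCard.1 hT).1 h')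
    have hmU : m ∉ U := fun h' => hm ((mem_powersetCard.1 hU).1 h')
    rw [← erase_insert hmT, ← erase_insert hmU, h]
  rw [altSubsetSum, range_add_one, powersetCard_succ_insert hm, sum_union hdisj, sum_image hinj,
    altSubsetSum, altSubsetSum, mul_sum]
  congr 1
  refine sum_congr rfl fun T hT => ?_
  rw [sum_insert fun h' => hm ((mem_powersetCard.1 hT).1 h'), pow_add]

lemma add_two_one (m : ℕ) : altSubsetSum (m + 2) 1 = altSubsetSum m 1 := by
  rw [succ_succ, succ_succ, zero_right, zero_right, pow_succ]
  ring

lemma add_two_add_two (m k : ℕ) :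
    altSubsetSum (m + 2) (k + 2) = altSubsetSum m (k + 2) - altSubsetSum m k := by
  have hsq : (-1 : ℤ) ^ m * (-1) ^ m = 1 := by rw [← pow_add, Even.neg_one_pow ⟨m, rfl⟩]
  rw [succ_succ, succ_succ, succ_succ, pow_succ]
  linear_combination (-altSubsetSum m k) * hsq

lemma two_mul_two_mul_add_one (a j : ℕ) : altSubsetSum (2 * a) (2 * j + 1) = 0 := by
  induction a generalizing j with
  | zero => exact zero_succ _
  | succ a ih =>
    rw [mul_add_one]
    rcases j with _ | j
    · exact (add_two_one _).trans (ih 0)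
    · calc altSubsetSum (2 * a + 2) (2 * (j + 1) + 1)
            = altSubsetSum (2 * a) (2 * (j + 1) + 1) - altSubsetSum (2 * a) (2 * j + 1) :=
              add_two_add_two _ _
          _ = 0 := by rw [ih, ih, sub_zero]

lemma two_mul_two_mul (a j : ℕ) :
    altSubsetSum (2 * a) (2 * j) = (-1) ^ j * a.choose j := by
  induction a generalizing j with
  | zero =>
    rcases j with _ | j
    · simp
    · simp only [Nat.choose_zero_succ, Nat.cast_zero, mul_zero]
      exact zero_succ (2 * j + 1)
  | succ a ih =>
    rcases j with _ | j
    · simp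
    · calc altSubsetSum (2 * (a + 1)) (2 * (j + 1))
            = altSubsetSum (2 * a) (2 * (j + 1)) - altSubsetSum (2 * a) (2 * j) :=
              add_two_add_two _ _
          _ = (-1) ^ (j + 1) * (a + 1).choose (j + 1) := by
            rw [ih, ih, Nat.choose_succ_succ']
            push_cast
            ring

lemma two_mul_add_one (a k : ℕ) :
    altSubsetSum (2 * a + 1) k = (-1) ^ (k / 2) * a.choose (k / 2) := by
  rcases k with _ | k
  · simp
  rw [succ_succ, (even_two_mul a).neg_one_pow, one_mul]
  obtain ⟨j, rfl | rfl⟩ := Nat.even_or_odd' k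
  · rw [two_mul_two_mul_add_one, two_mul_two_mul, zero_add, Nat.mul_add_div two_pos,
      Nat.div_eq_of_lt one_lt_two, add_zero]
  · rw [show 2 * j + 1 + 1 = 2 * (j + 1) by ring, two_mul_two_mul, two_mul_two_mul_add_one,
      add_zero, Nat.mul_div_cancel_left _ two_pos]

end altSubsetSum

/-- Ascher's formula: twice the number of `n`-even sequences equals
`C(2n-1, n) + C(n-1, ⌊n/2⌋)`. -/
theorem count_n_even (n : ℕ) (hn : 1 ≤ n) :
    2 * Nat.card {b : Fin n → ℕ //
        Antitone b ∧ (∀ i, b i ≤ n - 1) ∧ Even (∑ i, b i)} =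
      Nat.choose (2 * n - 1) n + Nat.choose (n - 1) (n / 2) := by
  set s := ∑ i ∈ range n, i
  have hparity (x y : ℕ) : Even (x + y + y) ↔ Even x := by
    rw [add_assoc, ← two_mul, Nat.even_add, iff_true_right (even_two_mul y)]
  have hcard :
      Nat.card {b : Fin n → ℕ // Antitone b ∧ (∀ i, b i ≤ n - 1) ∧ Even (∑ i, b i)} =
        #{T ∈ (range (2 * n - 1)).powersetCard n | Even (∑ x ∈ T, x + s)} := by
    rw [card_antitone_bounded_eq_card_monotone_bounded, show 2 * n - 1 = n - 1 + n by omega,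
      ← card_monotone_bounded_eq_card_filter (n - 1) (fun x => Even (x + s))]
    simp only [s, hparity]
  have hsign : (-1 : ℤ) ^ s * (-1) ^ (n / 2) = 1 := by
    rw [← pow_add]
    exact (even_sum_range_add_div_two n).neg_one_pow
  have hsum : ∑ T ∈ (range (2 * n - 1)).powersetCard n, (-1 : ℤ) ^ (∑ x ∈ T, x + s) =
      (-1) ^ s * altSubsetSum (2 * n - 1) n := by
    simp only [pow_add, altSubsetSum, mul_sum, mul_comm]
  have hodd : 2 * n - 1 = 2 * (n - 1) + 1 := by omega
  have key : (2 * #{T ∈ (range (2 * n - 1)).powersetCard n | Even (∑ x ∈ T, x + s)} : ℤ) =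
      (2 * n - 1).choose n + (n - 1).choose (n / 2) := by
    rw [two_mul_card_filter_even, card_powersetCard, card_range, hsum, hodd,
      altSubsetSum.two_mul_add_one, ← mul_assoc, hsign, one_mul]
  rw [hcard]
  exact_mod_cast key
end

section
/- Let R(n) = C(2n-1, n) and E(n) = (1/2)(C(2n-1, n) + C(n-1, ⌊n/2⌋)). Then the sequence E(n)/R(n) is strictly decreasing in n (for n ≥ 1) and converges to 1/2 as n → ∞. -/
/-!
Write `E(n)/R(n) = 1/2 + ρ(n)/2` with `ρ(n) = C(n-1, ⌊n/2⌋) / C(2n-1, n)`. Passing from `n` to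
`n + 1`, the numerator at most doubles (a binomial coefficient is the sum of two neighbours from
the previous row, each bounded by the middle one), while the denominator, half the central
binomial coefficient, grows by the factor `2(2n+1)/(n+1)`. Hence `ρ(n+1) ≤ (n+1)/(2n+1) · ρ(n)
≤ 2/3 · ρ(n)`, so `ρ` is strictly decreasing and tends to `0`.
-/

open Filter

namespace Nat

theorem choose_succ_le_two_mul_choose_half (n k : ℕ) :
    (n + 1).choose k ≤ 2 * n.choose (n / 2) := by
  cases k with
  | zero =>
    have := choose_pos (div_le_self n 2)
    rw [choose_zero_right]
    omega
  | succ k =>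
    rw [choose_succ_succ, two_mul]
    exact add_le_add (choose_le_middle k n) (choose_le_middle (k + 1) n)

theorem choose_succ_half_eq_choose_half (n : ℕ) : n.choose ((n + 1) / 2) = n.choose (n / 2) :=
  choose_symm_of_eq_add (by omega)

theorem two_mul_choose_eq_centralBinom_succ (n : ℕ) :
    2 * (2 * n + 1).choose (n + 1) = centralBinom (n + 1) := by
  rw [centralBinom_eq_two_mul_choose, show 2 * (n + 1) = 2 * n + 1 + 1 by ring,
    choose_succ_succ (2 * n + 1) n, ← choose_symm_half, two_mul]

end Nat

noncomputable def parityBias (n : ℕ) : ℝ :=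
  ((n - 1).choose (n / 2) : ℝ) / (2 * n - 1).choose n

theorem parityBias_succ (n : ℕ) :
    parityBias (n + 1) = 2 * (n.choose (n / 2) : ℝ) / (n + 1).centralBinom := by
  rw [parityBias, ← Nat.two_mul_choose_eq_centralBinom_succ,
    show 2 * (n + 1) - 1 = 2 * n + 1 by omega, Nat.add_sub_cancel,
    ← Nat.choose_succ_half_eq_choose_half]
  push_cast
  rw [mul_div_mul_left _ _ two_ne_zero]

theorem parityBias_succ_pos (n : ℕ) : 0 < parityBias (n + 1) := by
  rw [parityBias_succ]
  have := Nat.choose_pos (Nat.div_le_self n 2)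
  have := Nat.centralBinom_pos (n + 1)
  positivity

theorem parityBias_succ_succ_le (n : ℕ) :
    parityBias (n + 2) ≤ (n + 2) / (2 * n + 3) * parityBias (n + 1) := by
  have hC : ((n + 1).choose ((n + 1) / 2) : ℝ) ≤ 2 * n.choose (n / 2) := by
    exact_mod_cast Nat.choose_succ_le_two_mul_choose_half n _
  have hpos : (0 : ℝ) < (n + 1).centralBinom := by exact_mod_cast Nat.centralBinom_pos (n + 1)
  have hcb : ((n + 2).centralBinom : ℝ) = 2 * (2 * n + 3) * (n + 1).centralBinom / (n + 2) := by
    have h := congrArg (Nat.cast (R := ℝ)) (Nat.succ_mul_centralBinom_succ (n + 1))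
    push_cast at h
    rw [eq_div_iff (by positivity)]
    linarith
  rw [parityBias_succ, parityBias_succ, hcb]
  field_simp
  exact hC

theorem parityBias_succ_succ_le_two_thirds (n : ℕ) :
    parityBias (n + 2) ≤ 2 / 3 * parityBias (n + 1) := by
  refine (parityBias_succ_succ_le n).trans
    (mul_le_mul_of_nonneg_right ?_ (parityBias_succ_pos n).le)
  rw [div_le_div_iff₀ (by positivity) (by norm_num)]
  linarith [(Nat.cast_nonneg n : (0 : ℝ) ≤ n)]

theorem parityBias_strictAntiOn : StrictAntiOn parityBias (Set.Ici 1) :=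
  strictAntiOn_Ici_of_lt_pred fun m hm => by
    obtain ⟨n, rfl⟩ : ∃ n, m = n + 2 := ⟨m - 2, by omega⟩
    rw [Order.pred_eq_sub_one, Nat.add_succ_sub_one]
    linarith [parityBias_succ_succ_le_two_thirds n, parityBias_succ_pos n]

theorem tendsto_parityBias_atTop : Tendsto parityBias atTop (nhds 0) := by
  refine (summable_of_ratio_norm_eventually_le (r := 2 / 3) (by norm_num) ?_).tendsto_atTop_zero
  filter_upwards [eventually_ge_atTop 1] with n hn
  obtain ⟨n, rfl⟩ := Nat.exists_eq_add_of_le' hn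
  rw [Real.norm_of_nonneg (parityBias_succ_pos _).le,
    Real.norm_of_nonneg (parityBias_succ_pos _).le]
  exact parityBias_succ_succ_le_two_thirds n

/-- The ratio `E(n)/R(n)` is strictly decreasing and tends to `1/2`. -/
theorem E_over_R (R E : ℕ → ℝ)
    (hR : ∀ n, R n = Nat.choose (2 * n - 1) n)
    (hE : ∀ n, E n = ((Nat.choose (2 * n - 1) n : ℝ) + (Nat.choose (n - 1) (n / 2) : ℝ)) / 2) :
    (∀ m n, 1 ≤ m → m < n → E n / R n < E m / R m) ∧
    Tendsto (fun n => E n / R n) atTop (nhds (1 / 2)) := by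
  have hratio : ∀ n, E n / R n = 1 / 2 + parityBias n / 2 := fun n => by
    have : ((2 * n - 1).choose n : ℝ) ≠ 0 := by
      exact_mod_cast (Nat.choose_pos (by omega)).ne'
    rw [hE, hR, parityBias]
    field_simp
  simp only [hratio]
  refine ⟨fun m n hm hmn => ?_, ?_⟩
  · linarith [parityBias_strictAntiOn (Set.mem_Ici.2 hm) (Set.mem_Ici.2 (hm.trans hmn.le))
      hmn]
  · simpa using (tendsto_parityBias_atTop.div_const 2).const_add (1 / 2 : ℝ)
end
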